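/- Every permutohedron vector H_{p,s} (with s the standard offset vector) is orthogonal to every lattice-line characteristic vector X_alpha^{(i,j)} in R^{V(d,n)}. -/

import Mathlib

/-!
Left multiplication by the transposition `(i j)` is a sign-reversing involution on `S_d`.
Since `(swap i j * σ)⁻¹ k = σ⁻¹ k` for `k ∉ {i, j}`, the vertices `p + (swap i j * σ)(s)` and
`p + σ(s)` differ only in coordinates `i, j`, so they lie on the same lattice line through `α`
or both off it. Hence the terms of `⟨H_{p,s}, X_α^{(i,j)}⟩ = ∑ σ, sign σ X_α^{(i,j)}(p + σ(s))`
cancel in pairs.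
-/

open Finset

abbrev SRVert (d n : ℕ) : Type := {x : Fin d → ℕ // ∑ i, x i = n}

noncomputable instance SRVert.fintype (d n : ℕ) : Fintype (SRVert d n) :=
  Fintype.ofInjective
    (fun x : SRVert d n => fun i => (⟨x.1 i, by
      have h := Finset.single_le_sum (f := x.1)
        (fun j _ => Nat.zero_le (x.1 j)) (Finset.mem_univ i)
      have h2 := x.2
      omega⟩ : Fin (n+1)))
    (fun x y h => Subtype.ext (funext fun i => congrArg Fin.val (congrFun h i)))

/-- The simplicial rook graph: two vertices are adjacent if they differ in
exactly two coordinates. -/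
def SR (d n : ℕ) : SimpleGraph (SRVert d n) where
  Adj x y := (Finset.univ.filter fun i => x.1 i ≠ y.1 i).card = 2
  symm := by
    constructor
    intro x y h
    rw [show (Finset.univ.filter fun i => y.1 i ≠ x.1 i)
        = (Finset.univ.filter fun i => x.1 i ≠ y.1 i) by
      apply Finset.filter_congr; intro i _; simp [ne_comm]]
    exact h
  loopless := by constructor; intro z h; simp at h

instance (d n : ℕ) : DecidableRel (SR d n).Adj :=
  fun x y => inferInstanceAs (Decidable (_ = 2))


/-- The standard offset vector, whose `i`-th coordinate (`0`-indexed) is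
`(2(i+1) - 1 - d)/2`. -/
noncomputable def soff (d : ℕ) : Fin d → ℝ := fun i => (2*(i : ℝ) + 1 - d)/2

/-- Characteristic vector of the lattice line through `α` in direction
`e_i - e_j`: the vertices agreeing with `α` off coordinates `i, j`. -/
def Xline (d n : ℕ) (α : SRVert d n) (i j : Fin d) : SRVert d n → ℝ :=
  fun β => if ∀ k, k ≠ i → k ≠ j → β.1 k = α.1 k then 1 else 0

open Equiv

theorem sum_sum_mul_ite_eq_mul {ι V R : Type*} [Fintype ι] [Fintype V] [DecidableEq V]
    [NonAssocSemiring R] (w : ι → R) (f : ι → V) (g : V → R) :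
    ∑ v, (∑ σ, w σ * (if v = f σ then 1 else 0)) * g v = ∑ σ, w σ * g (f σ) := by
  simp only [sum_mul, mul_ite, mul_one, mul_zero, ite_mul, zero_mul]
  rw [sum_comm]
  simp only [sum_ite_eq', mem_univ, if_true]

theorem sum_sign_mul_eq_zero_of_swap_mul {α R : Type*} [Fintype α] [DecidableEq α] [Ring R]
    (g : Perm α → R) {i j : α} (hij : i ≠ j) (hg : ∀ σ, g (swap i j * σ) = g σ) :
    ∑ σ, ((Perm.sign σ : ℤ) : R) * g σ = 0 :=
  sum_involution (fun σ _ => swap i j * σ)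
    (fun σ _ => by simp [hg σ, Perm.sign_swap hij])
    (fun _ _ _ => (not_congr swap_mul_eq_iff).mpr hij) (fun _ _ => mem_univ _)
    fun σ _ => swap_mul_involutive i j σ

theorem Equiv.Perm.inv_swap_mul_apply_of_ne {α : Type*} [DecidableEq α] (σ : Perm α) {i j k : α}
    (hki : k ≠ i) (hkj : k ≠ j) : (swap i j * σ)⁻¹ k = σ⁻¹ k := by
  rw [mul_inv_rev, swap_inv, Perm.mul_apply, swap_apply_of_ne_of_ne hki hkj]

theorem Xline_eq_of_eq_off {d n : ℕ} (α : SRVert d n) {i j : Fin d} {u v : SRVert d n}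
    (huv : ∀ k, k ≠ i → k ≠ j → u.1 k = v.1 k) : Xline d n α i j u = Xline d n α i j v := by
  unfold Xline
  congr 1
  exact propext <| forall_congr' fun k =>
    forall_congr' fun hki => forall_congr' fun hkj => by rw [huv k hki hkj]

/-- every permutohedron vector `H_{p,s}` (with `s` the standard
offset vector) is orthogonal to every lattice-line vector `X_α^{(i,j)}`. -/
theorem permutohedron_orthogonal_lines (d n : ℕ)
    (p : Fin d → ℝ) (f : Equiv.Perm (Fin d) → SRVert d n)
    (hf : ∀ σ i, ((f σ).1 i : ℝ) = p i + soff d (σ⁻¹ i))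
    (α : SRVert d n) (i j : Fin d) (hij : i < j) :
    ∑ v, (∑ σ : Equiv.Perm (Fin d),
        ((Equiv.Perm.sign σ : ℤ) : ℝ) * (if v = f σ then 1 else 0))
      * Xline d n α i j v = 0 := by
  rw [sum_sum_mul_ite_eq_mul]
  refine sum_sign_mul_eq_zero_of_swap_mul _ hij.ne fun σ => Xline_eq_of_eq_off α ?_
  intro k hki hkj
  have hk : ((f (swap i j * σ)).1 k : ℝ) = (f σ).1 k := by
    rw [hf, hf, Perm.inv_swap_mul_apply_of_ne σ hki hkj]
  exact_mod_cast hk
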